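/- Let A ∈ 𝒮ⁿ[k] be a Robinson matrix and let d ∈ 𝔻ᵏ satisfy the path condition for A. Then the map Π : [n] → ℝ defined recursively by Π(1) = 0 and Π(v) = (ub_v + lb_v)/2 for 2 ≤ v ≤ n is strictly increasing. -/

import Mathlib

/-- The standard unit vector `χ_t ∈ ℤᵏ` (as a function `ℕ → ℤ`, supported on index `t`). -/
def chi (t : ℕ) : ℕ → ℤ := fun i => if i = t then 1 else 0

/-- The dot product `bᵀ d = Σ_{i=1}^k b_i d_i`. -/
def dotProd (k : ℕ) (b : ℕ → ℤ) (d : ℕ → ℝ) : ℝ :=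
  ∑ i ∈ Finset.Icc 1 k, (b i : ℝ) * d i

/-- `A ∈ 𝒮ⁿ[k]`: a symmetric matrix with entries in `{0,…,k}`, diagonal `k`,
entries increasing towards the diagonal. -/
def IsRobinson (n k : ℕ) (a : Fin n → Fin n → ℕ) : Prop :=
  (∀ u v, a u v = a v u) ∧ (∀ u, a u u = k) ∧ (∀ u v, a u v ≤ k) ∧
    ∀ u v w : Fin n, u < v → v < w → a u w ≤ a u v ∧ a u w ≤ a v w

/-- `d ∈ 𝔻ᵏ`: threshold vectors with `d 1 > d 2 > ⋯ > d k > 0`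
(values outside `{1,…,k}` are irrelevant). -/
def IsThreshold (k : ℕ) (d : ℕ → ℝ) : Prop :=
  (∀ i, 1 ≤ i → i < k → d (i + 1) < d i) ∧ 0 < d k

/-- Uniform embedding: for all pairs `u,v` and all `t ≤ k`,
`a u v = t ↔ d_{t+1} < |f v − f u| ≤ d_t`, with conventions `d_0 = +∞`, `d_{k+1} = −∞`. -/
def IsUnifEmb (n k : ℕ) (a : Fin n → Fin n → ℕ) (d : ℕ → ℝ)
    (f : Fin n → ℝ) : Prop :=
  ∀ u v : Fin n, ∀ t : ℕ, t ≤ k →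
    (a u v = t ↔ (t = k ∨ d (t + 1) < |f v - f u|) ∧ (t = 0 ∨ |f v - f u| ≤ d t))

/-- The strict inequality system: for all `u < v` and all `t ≤ k`,
`a u v = t ↔ d_{t+1} < f v − f u < d_t`, with conventions `d_0 = +∞`, `d_{k+1} = 0`. -/
def SatisfiesStrict (n k : ℕ) (a : Fin n → Fin n → ℕ) (d : ℕ → ℝ)
    (f : Fin n → ℝ) : Prop :=
  ∀ u v : Fin n, u < v → ∀ t : ℕ, t ≤ k →
    (a u v = t ↔ ((if t = k then (0 : ℝ) else d (t + 1)) < f v - f u) ∧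
      (t = 0 ∨ f v - f u < d t))

/-- `β⁺(x,y)`: for `x < y`, `β⁺(x,y) = χ_{a x y}` (junk value `χ_0` when `a x y = 0`,
where it is undefined); for `x > y`, `β⁺(x,y) = −β⁻(y,x)`. -/
def betaP {n : ℕ} (k : ℕ) (a : Fin n → Fin n → ℕ) (x y : Fin n) : ℕ → ℤ :=
  if x < y then chi (a x y)
  else if y < x then (if a x y = k then 0 else -chi (a x y + 1))
  else 0

/-- `β⁻(x,y)`: for `x < y`, `β⁻(x,y) = χ_{a x y + 1}` if `a x y < k` and `0` if `a x y = k`;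
for `x > y`, `β⁻(x,y) = −β⁺(y,x)`. -/
def betaM {n : ℕ} (k : ℕ) (a : Fin n → Fin n → ℕ) (x y : Fin n) : ℕ → ℤ :=
  if x < y then (if a x y = k then 0 else chi (a x y + 1))
  else if y < x then -chi (a x y)
  else 0

/-- `β⁺(W) = Σ_i β⁺(w_{i−1}, w_i)` over the steps of the walk `W`. -/
def betaPWalk {n : ℕ} (k : ℕ) (a : Fin n → Fin n → ℕ) (w : List (Fin n)) : ℕ → ℤ :=
  ((w.zip w.tail).map fun p => betaP k a p.1 p.2).sum

/-- `β⁻(W) = Σ_i β⁻(w_{i−1}, w_i)` over the steps of the walk `W`. -/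
def betaMWalk {n : ℕ} (k : ℕ) (a : Fin n → Fin n → ℕ) (w : List (Fin n)) : ℕ → ℤ :=
  ((w.zip w.tail).map fun p => betaM k a p.1 p.2).sum

/-- A `(u,v)`-upper-bound-walk: a walk from `u` to `v` with consecutive entries distinct,
in which every increasing step is an edge (`a x y ≥ 1`). -/
def IsUBWalk {n : ℕ} (a : Fin n → Fin n → ℕ) (u v : Fin n) (w : List (Fin n)) : Prop :=
  w.head? = some u ∧ w.getLast? = some v ∧
    List.Chain' (fun x y => x ≠ y ∧ (x < y → 1 ≤ a x y)) w

/-- A `(u,v)`-lower-bound-walk: a walk from `u` to `v` with consecutive entries distinct,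
in which every decreasing step is an edge (`a x y ≥ 1`). -/
def IsLBWalk {n : ℕ} (a : Fin n → Fin n → ℕ) (u v : Fin n) (w : List (Fin n)) : Prop :=
  w.head? = some u ∧ w.getLast? = some v ∧
    List.Chain' (fun x y => x ≠ y ∧ (y < x → 1 ≤ a x y)) w

/-- An upper-bound-cycle: a `(u,u)`-upper-bound-walk of length `p ≥ 2` in which
`u = w_0 = w_p` is the only repeated vertex. -/
def IsUBCycle {n : ℕ} (a : Fin n → Fin n → ℕ) (w : List (Fin n)) : Prop :=
  ∃ u : Fin n, IsUBWalk a u u w ∧ 3 ≤ w.length ∧ w.dropLast.Nodup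

/-- The path condition for `A` and `d`: for all `u < v`, every `(u,v)`-upper-bound-path `W₁`
and every `(u,v)`-lower-bound-path `W₂` satisfy `β⁻(W₂)ᵀ d < β⁺(W₁)ᵀ d`. -/
def PathCondition (n k : ℕ) (a : Fin n → Fin n → ℕ) (d : ℕ → ℝ) : Prop :=
  ∀ u v : Fin n, u < v → ∀ w₁ w₂ : List (Fin n),
    IsUBWalk a u v w₁ → w₁.Nodup → IsLBWalk a u v w₂ → w₂.Nodup →
      dotProd k (betaMWalk k a w₂) d < dotProd k (betaPWalk k a w₁) d

/-- The prefix-sum partial order `⪯` on `ℤᵏ`. -/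
def Preceq (k : ℕ) (x y : ℕ → ℤ) : Prop :=
  ∀ t, 1 ≤ t → t ≤ k → ∑ i ∈ Finset.Icc 1 t, x i ≤ ∑ i ∈ Finset.Icc 1 t, y i

/-!
The heart of the proof is `lb v < ub v` for every vertex `v` but the first, by strong induction
on `v`; then for `u < v` the one-step path `[u, v]` gives `f u ≤ f u + β⁻(u,v)ᵀd ≤ lb v < f v`.
If `ub v` and `lb v` are attained by paths from the same start, `lb v < ub v` is the path
condition. Otherwise the lower-bound path from `j` followed by the reversed upper-bound path to
`i` is a lower-bound walk from `j` to `i` of value `lb v - ub v + f i - f j`. Every cycle of a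
lower-bound walk has negative value (path condition again), so the walk shortens to a path of at
least that value, and this path (or its reverse) competes for `lb i` or `ub j`; the induction
hypothesis `lb < ub` there, together with `f = (ub + lb) / 2`, makes the value less than
`f i - f j`.
-/

section StepSum

variable {α M : Type*}

def stepSum [AddCommMonoid M] (g : α → α → M) (l : List α) : M :=
  ((l.zip l.tail).map fun p => g p.1 p.2).sum

@[simp]
theorem stepSum_singleton [AddCommMonoid M] (g : α → α → M) (x : α) : stepSum g [x] = 0 := rfl

@[simp]
theorem stepSum_cons_cons [AddCommMonoid M] (g : α → α → M) (x y : α) (l : List α) :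
    stepSum g (x :: y :: l) = g x y + stepSum g (y :: l) := by
  simp [stepSum]

theorem stepSum_append_cons [AddCommMonoid M] (g : α → α → M) (l : List α) (x : α)
    (r : List α) : stepSum g (l ++ x :: r) = stepSum g (l ++ [x]) + stepSum g (x :: r) := by
  induction l with
  | nil => simp
  | cons y l ih =>
    cases l with
    | nil => simp
    | cons z l =>
      simp only [List.cons_append, stepSum_cons_cons] at ih ⊢
      rw [ih, add_assoc]

theorem stepSum_reverse [AddCommMonoid M] (g : α → α → M) (l : List α) :
    stepSum g l.reverse = stepSum (fun x y => g y x) l := by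
  induction l with
  | nil => rfl
  | cons x l ih =>
    cases l with
    | nil => rfl
    | cons y l =>
      rw [List.reverse_cons, List.reverse_cons, List.append_assoc, List.singleton_append,
        stepSum_append_cons, ← List.reverse_cons, ih, stepSum_cons_cons, stepSum_cons_cons,
        stepSum_singleton, add_zero, add_comm]

theorem stepSum_neg [AddCommGroup M] (g : α → α → M) (l : List α) :
    stepSum (fun x y => -g x y) l = -stepSum g l := by
  unfold stepSum
  induction l.zip l.tail <;> simp [*, add_comm]

end StepSum

section Walks

variable {n k : ℕ} {a : Fin n → Fin n → ℕ} {d : ℕ → ℝ}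

theorem IsThreshold.pos (hd : IsThreshold k d) {s : ℕ} (hs : 1 ≤ s) (hsk : s ≤ k) : 0 < d s := by
  induction hsk using Nat.decreasingInduction with
  | self => exact hd.2
  | of_succ s hsk ih => exact (ih (by omega)).trans (hd.1 s hs hsk)

@[simp]
theorem dotProd_zero : dotProd k 0 d = 0 := by simp [dotProd]

theorem dotProd_add (x y : ℕ → ℤ) : dotProd k (x + y) d = dotProd k x d + dotProd k y d := by
  simp [dotProd, Finset.sum_add_distrib, add_mul]

theorem dotProd_neg (x : ℕ → ℤ) : dotProd k (-x) d = -dotProd k x d := by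
  simp [dotProd, Finset.sum_neg_distrib]

theorem dotProd_chi {s : ℕ} (hs : 1 ≤ s) (hsk : s ≤ k) : dotProd k (chi s) d = d s := by
  rw [dotProd, Finset.sum_eq_single_of_mem s (Finset.mem_Icc.2 ⟨hs, hsk⟩)]
  · simp [chi]
  · intro i _ hi
    simp [chi, hi]

theorem dotProd_betaM_nonneg (hd : IsThreshold k d) {u v : Fin n} (hle : a u v ≤ k)
    (huv : u < v) : 0 ≤ dotProd k (betaM k a u v) d := by
  rw [betaM, if_pos huv]
  split_ifs with hk
  · simp
  · rw [dotProd_chi (by omega) (by omega)]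
    exact (hd.pos (by omega) (by omega)).le

theorem betaM_swap (hsym : ∀ u v, a u v = a v u) (x y : Fin n) :
    betaM k a y x = -betaP k a x y := by
  rcases lt_trichotomy x y with h | rfl | h
  · simp [betaM, betaP, h, h.not_gt, hsym y x]
  · simp [betaM, betaP]
  · simp only [betaM, betaP, h, h.not_gt, if_true, if_false, hsym y x]
    split_ifs <;> simp

theorem betaMWalk_eq_stepSum (w : List (Fin n)) : betaMWalk k a w = stepSum (betaM k a) w := rfl

theorem betaPWalk_eq_stepSum (w : List (Fin n)) : betaPWalk k a w = stepSum (betaP k a) w := rfl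

theorem betaMWalk_pair (x y : Fin n) : betaMWalk k a [x, y] = betaM k a x y := by
  simp [betaMWalk_eq_stepSum]

theorem betaMWalk_cons_cons (x y : Fin n) (l : List (Fin n)) :
    betaMWalk k a (x :: y :: l) = betaM k a x y + betaMWalk k a (y :: l) :=
  stepSum_cons_cons _ x y l

theorem betaMWalk_append_cons (l : List (Fin n)) (x : Fin n) (r : List (Fin n)) :
    betaMWalk k a (l ++ x :: r) = betaMWalk k a (l ++ [x]) + betaMWalk k a (x :: r) :=
  stepSum_append_cons _ l x r

theorem betaMWalk_reverse (hsym : ∀ u v, a u v = a v u) (w : List (Fin n)) :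
    betaMWalk k a w.reverse = -betaPWalk k a w := by
  simp only [betaMWalk_eq_stepSum, betaPWalk_eq_stepSum, stepSum_reverse, betaM_swap hsym,
    stepSum_neg]

theorem betaPWalk_reverse (hsym : ∀ u v, a u v = a v u) (w : List (Fin n)) :
    betaPWalk k a w.reverse = -betaMWalk k a w := by
  rw [← neg_neg (betaPWalk k a w.reverse), ← betaMWalk_reverse hsym, List.reverse_reverse]

theorem IsUBWalk.reverse (hsym : ∀ u v, a u v = a v u) {u v : Fin n} {w : List (Fin n)}
    (h : IsUBWalk a u v w) : IsLBWalk a v u w.reverse := by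
  obtain ⟨hu, hv, hw⟩ := h
  refine ⟨by rwa [List.head?_reverse], by rwa [List.getLast?_reverse], ?_⟩
  refine List.isChain_reverse.2 (List.IsChain.imp ?_ hw)
  rintro x y ⟨hxy, hedge⟩
  exact ⟨hxy.symm, fun h => hsym y x ▸ hedge h⟩

theorem IsLBWalk.reverse (hsym : ∀ u v, a u v = a v u) {u v : Fin n} {w : List (Fin n)}
    (h : IsLBWalk a u v w) : IsUBWalk a v u w.reverse := by
  obtain ⟨hu, hv, hw⟩ := h
  refine ⟨by rwa [List.head?_reverse], by rwa [List.getLast?_reverse], ?_⟩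
  refine List.isChain_reverse.2 (List.IsChain.imp ?_ hw)
  rintro x y ⟨hxy, hedge⟩
  exact ⟨hxy.symm, fun h => hsym y x ▸ hedge h⟩

theorem isLBWalk_iff {u v : Fin n} {w : List (Fin n)} :
    IsLBWalk a u v w ↔ w.head? = some u ∧ w.getLast? = some v ∧
      w.IsChain (fun x y => x ≠ y ∧ (y < x → 1 ≤ a x y)) :=
  Iff.rfl

theorem isLBWalk_pair {x y : Fin n} : IsLBWalk a x y [x, y] ↔ x ≠ y ∧ (y < x → 1 ≤ a x y) := by
  simp [isLBWalk_iff]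

theorem isLBWalk_append_cons {u v x : Fin n} {l r : List (Fin n)} :
    IsLBWalk a u v (l ++ x :: r) ↔ IsLBWalk a u x (l ++ [x]) ∧ IsLBWalk a x v (x :: r) := by
  have hhead : (l ++ x :: r).head? = (l ++ [x]).head? := by cases l <;> simp
  have hlast : (l ++ x :: r).getLast? = (x :: r).getLast? := by
    rw [List.getLast?_append_of_ne_nil _ (List.cons_ne_nil x r)]
  rw [isLBWalk_iff, isLBWalk_iff, isLBWalk_iff, hhead, hlast, List.isChain_split,
    List.getLast?_concat, List.head?_cons]
  tauto

end Walks

section PathCondition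

variable {n k : ℕ} {a : Fin n → Fin n → ℕ} {d : ℕ → ℝ}

/-- The path condition, applied to one of the two paths and the reverse of the other. -/
theorem dotProd_betaMWalk_add_lt_zero (hsym : ∀ u v, a u v = a v u)
    (hpc : PathCondition n k a d) {x y : Fin n} (hxy : x ≠ y) {p q : List (Fin n)}
    (hp : IsLBWalk a x y p) (hpnd : p.Nodup) (hq : IsLBWalk a y x q) (hqnd : q.Nodup) :
    dotProd k (betaMWalk k a p) d + dotProd k (betaMWalk k a q) d < 0 := by
  rcases hxy.lt_or_gt with h | h
  · have := hpc x y h q.reverse p (hq.reverse hsym) (List.nodup_reverse.2 hqnd) hp hpnd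
    rw [betaPWalk_reverse hsym, dotProd_neg] at this
    linarith
  · have := hpc y x h p.reverse q (hp.reverse hsym) (List.nodup_reverse.2 hpnd) hq hqnd
    rw [betaPWalk_reverse hsym, dotProd_neg] at this
    linarith

/-- Cycles are shortcut one at a time: each has negative value by
`dotProd_betaMWalk_add_lt_zero`. -/
theorem IsLBWalk.exists_nodup_le (hsym : ∀ u v, a u v = a v u) (hpc : PathCondition n k a d)
    {u v : Fin n} {w : List (Fin n)} (hw : IsLBWalk a u v w) :
    ∃ p, IsLBWalk a u v p ∧ p.Nodup ∧
      dotProd k (betaMWalk k a w) d ≤ dotProd k (betaMWalk k a p) d := by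
  induction w generalizing u with
  | nil => exact absurd hw.1 (by simp)
  | cons x t ih =>
    obtain rfl : x = u := by simpa using hw.1
    cases t with
    | nil => exact ⟨[x], hw, List.nodup_singleton x, le_rfl⟩
    | cons y t =>
      obtain ⟨hxy, hyv⟩ : IsLBWalk a x y [x, y] ∧ IsLBWalk a y v (y :: t) :=
        (isLBWalk_append_cons (l := [x])).1 hw
      have hxy_ne : x ≠ y := (isLBWalk_pair.1 hxy).1
      obtain ⟨p, hp, hpnd, hle⟩ := ih hyv
      rw [betaMWalk_cons_cons, dotProd_add]
      by_cases hxp : x ∈ p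
      · obtain ⟨l, r, rfl⟩ := List.append_of_mem hxp
        obtain ⟨hyx, hxv⟩ := isLBWalk_append_cons.1 hp
        have hcycle := dotProd_betaMWalk_add_lt_zero hsym hpc hxy_ne hxy
          (by simpa using hxy_ne) hyx (hpnd.sublist (by simp))
        refine ⟨x :: r, hxv, hpnd.sublist (by simp), ?_⟩
        rw [betaMWalk_pair] at hcycle
        rw [betaMWalk_append_cons, dotProd_add] at hle
        linarith
      · obtain ⟨p', rfl⟩ := List.head?_eq_some_iff.1 hp.1
        refine ⟨x :: y :: p', (isLBWalk_append_cons (l := [x])).2 ⟨hxy, hp⟩,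
          List.nodup_cons.2 ⟨hxp, hpnd⟩, ?_⟩
        rw [betaMWalk_cons_cons, dotProd_add]
        linarith

end PathCondition

section Embedding

variable {n k : ℕ} {a : Fin n → Fin n → ℕ} {d : ℕ → ℝ} {f ub lb : Fin n → ℝ}

def ubValues (k : ℕ) (a : Fin n → Fin n → ℕ) (d : ℕ → ℝ) (f : Fin n → ℝ) (v : Fin n) :
    Set ℝ :=
  {x | ∃ i : Fin n, i < v ∧ ∃ w : List (Fin n),
    IsUBWalk a i v w ∧ w.Nodup ∧ x = f i + dotProd k (betaPWalk k a w) d}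

def lbValues (k : ℕ) (a : Fin n → Fin n → ℕ) (d : ℕ → ℝ) (f : Fin n → ℝ) (v : Fin n) :
    Set ℝ :=
  {x | ∃ i : Fin n, i < v ∧ ∃ w : List (Fin n),
    IsLBWalk a i v w ∧ w.Nodup ∧ x = f i + dotProd k (betaMWalk k a w) d}

variable (hsym : ∀ u v, a u v = a v u)
  (hub : ∀ v : Fin n, 0 < v.val → IsLeast (ubValues k a d f v) (ub v))
  (hlb : ∀ v : Fin n, 0 < v.val → IsGreatest (lbValues k a d f v) (lb v))
  (hfv : ∀ v : Fin n, 0 < v.val → f v = (ub v + lb v) / 2)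
include hsym hub hlb hfv

/-- The path competes for `lb i` when `j < i`; its reverse competes for `ub j` when `i < j`. -/
theorem add_dotProd_betaMWalk_lt {i j : Fin n} (hij : i ≠ j)
    (hi : 0 < i.val → lb i < ub i) (hj : 0 < j.val → lb j < ub j) {p : List (Fin n)}
    (hp : IsLBWalk a j i p) (hpnd : p.Nodup) :
    f j + dotProd k (betaMWalk k a p) d < f i := by
  rcases hij.lt_or_gt with h | h
  · have hj0 : 0 < j.val := Nat.zero_lt_of_lt h
    have hle := (hub j hj0).2 ⟨i, h, p.reverse, hp.reverse hsym, List.nodup_reverse.2 hpnd, rfl⟩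
    rw [betaPWalk_reverse hsym, dotProd_neg] at hle
    have := hfv j hj0
    linarith [hj hj0]
  · have hi0 : 0 < i.val := Nat.zero_lt_of_lt h
    have hle := (hlb i hi0).2 ⟨j, h, p, hp, hpnd, rfl⟩
    have := hfv i hi0
    linarith [hi hi0]

theorem lb_lt_ub (hpc : PathCondition n k a d) (v : Fin n) (hv : 0 < v.val) : lb v < ub v := by
  induction v using WellFoundedLT.induction with
  | _ v ih =>
  obtain ⟨⟨i, hiv, w₁, hw₁, hw₁nd, hub_eq⟩, -⟩ := hub v hv
  obtain ⟨⟨j, hjv, w₂, hw₂, hw₂nd, hlb_eq⟩, -⟩ := hlb v hv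
  rw [hub_eq, hlb_eq]
  by_cases hij : i = j
  · subst hij
    linarith [hpc i v hiv w₁ w₂ hw₁ hw₁nd hw₂ hw₂nd]
  -- `w₂` followed by the reverse of `w₁` is a lower-bound walk from `j` to `i` through `v`
  obtain ⟨l, rfl⟩ := List.getLast?_eq_some_iff.1 hw₂.2.1
  obtain ⟨r, hr⟩ := List.head?_eq_some_iff.1 (hw₁.reverse hsym).1
  have hwalk : IsLBWalk a j i (l ++ v :: r) :=
    isLBWalk_append_cons.2 ⟨hw₂, hr ▸ hw₁.reverse hsym⟩
  have hval : betaMWalk k a (l ++ v :: r) = betaMWalk k a (l ++ [v]) - betaPWalk k a w₁ := by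
    rw [betaMWalk_append_cons, ← hr, betaMWalk_reverse hsym, sub_eq_add_neg]
  obtain ⟨p, hp, hpnd, hle⟩ := hwalk.exists_nodup_le hsym hpc
  have := add_dotProd_betaMWalk_lt hsym hub hlb hfv hij (ih i hiv) (ih j hjv) hp hpnd
  rw [hval, sub_eq_add_neg, dotProd_add, dotProd_neg] at hle
  linarith

end Embedding

theorem statement8_general (n k : ℕ) (a : Fin n → Fin n → ℕ)
    (hA : IsRobinson n k a) (d : ℕ → ℝ) (hd : IsThreshold k d)
    (hpc : PathCondition n k a d) (f ub lb : Fin n → ℝ)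
    (hub : ∀ v : Fin n, 0 < v.val → IsLeast
      {x : ℝ | ∃ i : Fin n, i < v ∧ ∃ w : List (Fin n),
        IsUBWalk a i v w ∧ w.Nodup ∧ x = f i + dotProd k (betaPWalk k a w) d} (ub v))
    (hlb : ∀ v : Fin n, 0 < v.val → IsGreatest
      {x : ℝ | ∃ i : Fin n, i < v ∧ ∃ w : List (Fin n),
        IsLBWalk a i v w ∧ w.Nodup ∧ x = f i + dotProd k (betaMWalk k a w) d} (lb v))
    (hfv : ∀ v : Fin n, 0 < v.val → f v = (ub v + lb v) / 2) :
    StrictMono f := by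
  obtain ⟨hsym, -, hle, -⟩ := hA
  intro u v huv
  have hv : 0 < v.val := Nat.zero_lt_of_lt huv
  have hpair : IsLBWalk a u v [u, v] := isLBWalk_pair.2 ⟨huv.ne, fun h => absurd h huv.not_gt⟩
  have hlb_ge := (hlb v hv).2 ⟨u, huv, [u, v], hpair, by simpa using huv.ne, rfl⟩
  rw [betaMWalk_pair] at hlb_ge
  have := lb_lt_ub hsym hub hlb hfv hpc v hv
  linarith [hfv v hv, dotProd_betaM_nonneg hd (hle u v) huv]

/-- Lemma 4: given `d ∈ 𝔻ᵏ` satisfying the path condition for `A`, the map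
`Π` defined recursively by `Π(1) = 0` and `Π(v) = (ub_v + lb_v)/2`, where
`ub_v = min_{i<v} (Π(i) + min{β⁺(W)ᵀd : W a (i,v)-upper-bound-path})` and
`lb_v = max_{i<v} (Π(i) + max{β⁻(W)ᵀd : W a (i,v)-lower-bound-path})`,
is strictly increasing. -/
theorem statement8 (n k : ℕ) (hn : 1 ≤ n) (hk : 1 ≤ k) (a : Fin n → Fin n → ℕ)
    (hA : IsRobinson n k a) (d : ℕ → ℝ) (hd : IsThreshold k d)
    (hpc : PathCondition n k a d) (f ub lb : Fin n → ℝ)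
    (hub : ∀ v : Fin n, 0 < v.val → IsLeast
      {x : ℝ | ∃ i : Fin n, i < v ∧ ∃ w : List (Fin n),
        IsUBWalk a i v w ∧ w.Nodup ∧ x = f i + dotProd k (betaPWalk k a w) d} (ub v))
    (hlb : ∀ v : Fin n, 0 < v.val → IsGreatest
      {x : ℝ | ∃ i : Fin n, i < v ∧ ∃ w : List (Fin n),
        IsLBWalk a i v w ∧ w.Nodup ∧ x = f i + dotProd k (betaMWalk k a w) d} (lb v))
    (hf0 : f ⟨0, hn⟩ = 0)
    (hfv : ∀ v : Fin n, 0 < v.val → f v = (ub v + lb v) / 2) :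
    StrictMono f :=
  statement8_general n k a hA d hd hpc f ub lb hub hlb hfv
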